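/- Let m ≥ 3 be odd, n = 3^m - 1, δ₁ = (3^m - 1)/2, δ₂ = (3^{m-1} - 1)/4 + 3^{m-2}. Then δ₂ is the second largest absolute coset leader: for every s ∈ Z_n with C_s ∉ {C_{δ₁}, C_{δ₂}, C_{n-δ₂}}, the absolute coset leader of C_s is strictly less than δ₂. -/

import Mathlib

/-- The 3-cyclotomic coset of `s` modulo `n`. -/
def cyclotomicCoset (n s : ℕ) : Set ℕ := {k | ∃ j : ℕ, k = s * 3 ^ j % n}

/-- The absolute coset leader of the 3-cyclotomic coset of `s` modulo `n`. -/
noncomputable def absCosetLeader (n s : ℕ) : ℕ :=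
  sInf {t | ∃ k ∈ cyclotomicCoset n s, t = min k (n - k)}

/-!
Write `m = 2v + 3`. The elements `s * 3 ^ j mod n` of a coset are the cyclic rotations of the
`m`-digit base-3 word of `s`; `δ₂` is the word `0 1 2 0 2 … 0 2` and `n - δ₂` its digitwise
complement `2 1 0 2 0 … 2 0`. Suppose every rotation lies in `[δ₂, n - δ₂]`. Then the cyclic word
contains neither `00` nor `22`, and after a block `01` (or `21`) it has to copy `δ₂` (or `n - δ₂`)
until its next `1`, which therefore comes an even number of steps later, unless that rotation is
`δ₂` or `n - δ₂` itself. As `m` is odd, these even steps from a `1` to the next cannot close up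
around the cycle. So the word is constantly `1`, i.e. `s = n / 2`, or contains no `1`, and then it
alternates between `0` and `2`, which is again impossible for odd `m`.
-/

section Digits

variable (b : ℕ)

theorem div_pow_eq_mul_div_pow_succ_add_mod (x p : ℕ) :
    x / b ^ p = b * (x / b ^ (p + 1)) + x / b ^ p % b := by
  rw [pow_succ, ← Nat.div_div_eq_div_mul, Nat.div_add_mod]

variable {b}

theorem div_pow_eq_of_div_pow_succ_eq {x y p : ℕ} (hhigh : x / b ^ (p + 1) = y / b ^ (p + 1))
    (hdigit : x / b ^ p % b = y / b ^ p % b) : x / b ^ p = y / b ^ p := by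
  rw [div_pow_eq_mul_div_pow_succ_add_mod b x, div_pow_eq_mul_div_pow_succ_add_mod b y, hhigh,
    hdigit]

theorem lt_of_div_pow_succ_eq_of_digit_lt {x y p : ℕ} (hhigh : x / b ^ (p + 1) = y / b ^ (p + 1))
    (hdigit : x / b ^ p % b < y / b ^ p % b) : x < y := by
  refine Nat.lt_of_div_lt_div (c := b ^ p) ?_
  rw [div_pow_eq_mul_div_pow_succ_add_mod b x, div_pow_eq_mul_div_pow_succ_add_mod b y, hhigh]
  omega

theorem div_pow_eq_of_le {x y q p : ℕ} (hqp : q ≤ p) (h : x / b ^ q = y / b ^ q) :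
    x / b ^ p = y / b ^ p := by
  rw [← Nat.add_sub_cancel' hqp, pow_add, ← Nat.div_div_eq_div_mul, ← Nat.div_div_eq_div_mul, h]

end Digits

/-- Digit `q + 1` of the left rotation `3 r + a` of the `K + 1`-digit word `3 ^ K a + r` is its
digit `q`. -/
theorem rotate_div_pow_succ_mod {K a r q : ℕ} (ha : a < 3) (hq : q < K) :
    (3 * r + a) / 3 ^ (q + 1) % 3 = (3 ^ K * a + r) / 3 ^ q % 3 := by
  have hlow : (3 * r + a) / 3 ^ (q + 1) = r / 3 ^ q := by
    rw [pow_succ', ← Nat.div_div_eq_div_mul, Nat.mul_add_div (by norm_num), Nat.div_eq_of_lt ha,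
      add_zero]
  have hK : 3 ^ K = 3 ^ q * (3 * 3 ^ (K - q - 1)) := by
    rw [← pow_succ', ← pow_add]; congr 1; omega
  rw [hlow, hK, mul_assoc, Nat.mul_add_div (by positivity), mul_assoc, Nat.mul_add_mod]

theorem three_mul_mod_three_mul_sub_one {W x : ℕ} (hx : x < 3 * W - 1) :
    3 * x % (3 * W - 1) = 3 * (x % W) + x / W := by
  have hW : 0 < W := by omega
  obtain ⟨q, r, hr, rfl⟩ : ∃ q r, r < W ∧ x = W * q + r :=
    ⟨x / W, x % W, Nat.mod_lt _ hW, (Nat.div_add_mod x W).symm⟩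
  have hq : q < 3 := by
    by_contra hq; have := Nat.mul_le_mul_left W (not_lt.mp hq); omega
  rw [Nat.mul_add_div hW, Nat.mul_add_mod, Nat.div_eq_of_lt hr, Nat.mod_eq_of_lt hr, add_zero]
  have hsplit : 3 * (W * q + r) = (3 * W - 1) * q + (3 * r + q) := by interval_cases q <;> omega
  rw [hsplit, Nat.mul_add_mod, Nat.mod_eq_of_lt (by interval_cases q <;> omega)]

theorem complement_div_mod {W x : ℕ} (hx : x < 3 * W) :
    (3 * W - 1 - x) / W = 2 - x / W ∧ (3 * W - 1 - x) % W = W - 1 - x % W := by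
  have hW : 0 < W := by omega
  obtain ⟨q, r, hr, rfl⟩ : ∃ q r, r < W ∧ x = W * q + r :=
    ⟨x / W, x % W, Nat.mod_lt _ hW, (Nat.div_add_mod x W).symm⟩
  have hq : q < 3 := by
    by_contra hq; have := Nat.mul_le_mul_left W (not_lt.mp hq); omega
  have hsplit : 3 * W - 1 - (W * q + r) = W * (2 - q) + (W - 1 - r) := by
    interval_cases q <;> omega
  rw [hsplit, Nat.mul_add_div hW, Nat.mul_add_mod, Nat.mul_add_div hW, Nat.mul_add_mod,
    Nat.div_eq_of_lt hr, Nat.mod_eq_of_lt hr, Nat.div_eq_of_lt (by omega),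
    Nat.mod_eq_of_lt (by omega)]
  omega

theorem exists_not_and_succ {P : ℕ → Prop} {a b : ℕ} (hab : a ≤ b) (ha : ¬P a) (hb : P b) :
    ∃ j, ¬P j ∧ P (j + 1) := by
  induction b, hab using Nat.le_induction with
  | base => exact absurd hb ha
  | succ b _ ih => by_cases h : P b; exacts [ih h, ⟨b, h, hb⟩]

theorem three_pow_modEq_one (m : ℕ) : 3 ^ m ≡ 1 [MOD 3 ^ m - 1] :=
  ((Nat.modEq_iff_dvd' (Nat.one_le_pow _ _ (by norm_num))).mpr dvd_rfl).symm

theorem cyclotomicCoset_eq_of_mem {n m s k : ℕ} (hm : 0 < m) (hn : 3 ^ m ≡ 1 [MOD n])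
    (hk : k ∈ cyclotomicCoset n s) : cyclotomicCoset n k = cyclotomicCoset n s := by
  obtain ⟨j, rfl⟩ := hk
  ext x
  constructor
  · rintro ⟨i, rfl⟩
    exact ⟨j + i, by rw [Nat.mod_mul_mod, mul_assoc, ← pow_add]⟩
  · rintro ⟨i, rfl⟩
    refine ⟨i + (m * j - j), ?_⟩
    have hj : j + (i + (m * j - j)) = i + m * j := by
      have := Nat.le_mul_of_pos_left j hm; omega
    calc s * 3 ^ i % n = s * 3 ^ i * 1 ^ j % n := by rw [one_pow, mul_one]
      _ = s * 3 ^ i * (3 ^ m) ^ j % n := ((hn.pow j).mul_left _).symm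
      _ = s * 3 ^ j % n * 3 ^ (i + (m * j - j)) % n := by
        rw [Nat.mod_mul_mod, mul_assoc s (3 ^ j), ← pow_add, hj, pow_add, pow_mul, mul_assoc]

/-- The weight `3 ^ (m - 1)` of the leading digit of an `m`-digit base-3 word, `m = 2v + 3`. -/
def topWeight (v : ℕ) : ℕ := 3 ^ (2 * v + 2)

theorem three_mul_topWeight (v : ℕ) : 3 * topWeight v = 3 ^ (2 * v + 3) := by
  rw [topWeight]; ring

theorem nine_le_topWeight (v : ℕ) : 9 ≤ topWeight v :=
  le_trans (by norm_num) (Nat.pow_le_pow_right (by norm_num) (by omega : 2 ≤ 2 * v + 2))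

/-- `δ₂` for `m = 2v + 3`: its `m`-digit base-3 word is `0 1 2 0 2 … 0 2`. -/
def delta2 : ℕ → ℕ
  | 0 => 5
  | v + 1 => 9 * delta2 v + 2

theorem twelve_mul_delta2_add_three (v : ℕ) : 12 * delta2 v + 3 = 7 * topWeight v := by
  induction v with
  | zero => rfl
  | succ v ih =>
    rw [topWeight, show 2 * (v + 1) + 2 = 2 * v + 2 + 2 by ring, pow_add, delta2]
    rw [topWeight] at ih
    omega

theorem delta2_eq (v : ℕ) : (3 ^ (2 * v + 2) - 1) / 4 + 3 ^ (2 * v + 1) = delta2 v := by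
  have h := twelve_mul_delta2_add_three v
  have h3 : 3 ^ (2 * v + 2) = 3 * 3 ^ (2 * v + 1) := by ring
  rw [topWeight, h3] at h
  rw [h3]
  omega

theorem delta2_mod_three (v : ℕ) : delta2 v % 3 = 2 := by
  cases v with
  | zero => rfl
  | succ v => rw [delta2]; omega

theorem delta2_div_three_pow_two_mul {v c : ℕ} (hc : c ≤ v) :
    delta2 v / 3 ^ (2 * c) = delta2 (v - c) := by
  induction c with
  | zero => simp
  | succ c ih =>
    obtain ⟨w, hw⟩ : ∃ w, v - c = w + 1 := ⟨v - c - 1, by omega⟩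
    rw [mul_add, pow_add, ← Nat.div_div_eq_div_mul, ih (by omega), hw, delta2,
      show v - (c + 1) = w by omega]
    norm_num
    omega

theorem delta2_digit_even {v c : ℕ} (hc : c ≤ v) : delta2 v / 3 ^ (2 * c) % 3 = 2 := by
  rw [delta2_div_three_pow_two_mul hc, delta2_mod_three]

theorem delta2_digit_odd {v c : ℕ} (hc : c < v) : delta2 v / 3 ^ (2 * c + 1) % 3 = 0 := by
  obtain ⟨w, hw⟩ : ∃ w, v - c = w + 1 := ⟨v - c - 1, by omega⟩
  rw [pow_succ, ← Nat.div_div_eq_div_mul, delta2_div_three_pow_two_mul hc.le, hw, delta2]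
  omega

theorem delta2_digit_ne_one {v p : ℕ} (hp : p ≤ 2 * v) : delta2 v / 3 ^ p % 3 ≠ 1 := by
  obtain ⟨c, rfl | rfl⟩ := Nat.even_or_odd' p
  · rw [delta2_digit_even (by omega)]; omega
  · rw [delta2_digit_odd (by omega)]; omega

theorem delta2_div_pow_two_mul_self (v : ℕ) : delta2 v / 3 ^ (2 * v) = 5 := by
  rw [delta2_div_three_pow_two_mul le_rfl, Nat.sub_self, delta2]

/-- `T j` is the `m`-digit base-3 word of `T 0` rotated left `j` times, `m = 2v + 3`, and every
rotation lies in `[δ₂, n - δ₂]`, `n = 3 ^ m - 1`. -/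
structure BoundedOrbit (v : ℕ) (T : ℕ → ℕ) : Prop where
  succ_eq : ∀ j, T (j + 1) = 3 * (T j % topWeight v) + T j / topWeight v
  periodic : Function.Periodic T (2 * v + 3)
  delta2_le : ∀ j, delta2 v ≤ T j
  add_delta2_le : ∀ j, T j + delta2 v ≤ 3 * topWeight v - 1

/-- The `j`-th letter of the cyclic digit word. -/
def leadDigit (v : ℕ) (T : ℕ → ℕ) (j : ℕ) : ℕ := T j / topWeight v

def IsRise (v : ℕ) (T : ℕ → ℕ) (j : ℕ) : Prop := leadDigit v T j ≠ 1 ∧ leadDigit v T (j + 1) = 1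

namespace BoundedOrbit

variable {v : ℕ} {T : ℕ → ℕ} (h : BoundedOrbit v T)
include h

theorem lt_three_mul_topWeight (j : ℕ) : T j < 3 * topWeight v := by
  have := h.add_delta2_le j; have := nine_le_topWeight v; omega

theorem leadDigit_lt_three (j : ℕ) : leadDigit v T j < 3 :=
  (Nat.div_lt_iff_lt_mul (by have := nine_le_topWeight v; omega)).mpr
    (h.lt_three_mul_topWeight j)

theorem leadDigit_periodic : Function.Periodic (leadDigit v T) (2 * v + 3) := fun j => by
  simp only [leadDigit, h.periodic j]

theorem leadDigit_add {k : ℕ} (hk : k ≤ 2 * v + 2) (j : ℕ) :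
    leadDigit v T (j + k) = T j / 3 ^ (2 * v + 2 - k) % 3 := by
  induction k generalizing j with
  | zero => exact (Nat.mod_eq_of_lt (h.leadDigit_lt_three j)).symm
  | succ k ih =>
    rw [← add_assoc, add_right_comm, ih (by omega), h.succ_eq,
      show 2 * v + 2 - k = 2 * v + 2 - (k + 1) + 1 by omega,
      rotate_div_pow_succ_mod (K := 2 * v + 2) (a := T j / topWeight v) (r := T j % topWeight v)
        (q := 2 * v + 2 - (k + 1)) (h.leadDigit_lt_three j) (by omega),
      ← topWeight, Nat.div_add_mod]

theorem complement : BoundedOrbit v (fun j => 3 * topWeight v - 1 - T j) where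
  succ_eq j := by
    obtain ⟨hdiv, hmod⟩ := complement_div_mod (h.lt_three_mul_topWeight j)
    simp only [hdiv, hmod, h.succ_eq j]
    have := h.leadDigit_lt_three j
    have := Nat.mod_lt (T j) (by have := nine_le_topWeight v; omega : 0 < topWeight v)
    unfold leadDigit at *
    omega
  periodic j := by simp only [h.periodic j]
  delta2_le j := by have := h.add_delta2_le j; omega
  add_delta2_le j := by have := h.add_delta2_le j; have := h.delta2_le j; omega

theorem leadDigit_complement (j : ℕ) :
    leadDigit v (fun j => 3 * topWeight v - 1 - T j) j = 2 - leadDigit v T j :=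
  (complement_div_mod (h.lt_three_mul_topWeight j)).1

theorem leadDigit_succ_ne_zero {j : ℕ} (h0 : leadDigit v T j = 0) :
    leadDigit v T (j + 1) ≠ 0 := by
  intro h1
  unfold leadDigit at h0 h1
  have hW := nine_le_topWeight v
  have hlt : T j < topWeight v := (Nat.div_eq_zero_iff.mp h0).resolve_left (by omega)
  have hlt1 : T (j + 1) < topWeight v := (Nat.div_eq_zero_iff.mp h1).resolve_left (by omega)
  have hs := h.succ_eq j
  rw [Nat.mod_eq_of_lt hlt, h0] at hs
  have := h.delta2_le j
  have := twelve_mul_delta2_add_three v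
  omega

theorem leadDigit_succ_ne_two {j : ℕ} (h2 : leadDigit v T j = 2) :
    leadDigit v T (j + 1) ≠ 2 := by
  have := h.complement.leadDigit_succ_ne_zero (j := j)
  rw [h.leadDigit_complement, h.leadDigit_complement, h2] at this
  have := h.leadDigit_lt_three (j + 1)
  omega

theorem leadDigit_add_two {j : ℕ} (h0 : leadDigit v T j = 0) (h1 : leadDigit v T (j + 1) = 1) :
    leadDigit v T (j + 2) = 2 := by
  unfold leadDigit at *
  have hW := nine_le_topWeight v
  have hlt : T j < topWeight v := (Nat.div_eq_zero_iff.mp h0).resolve_left (by omega)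
  have h01 := h.succ_eq j
  have h12 := h.succ_eq (j + 1)
  have hdecomp := Nat.div_add_mod (T (j + 1)) (topWeight v)
  rw [Nat.mod_eq_of_lt hlt, h0] at h01
  rw [h1] at h12 hdecomp
  have := h.delta2_le j
  have := h.add_delta2_le (j + 1 + 1)
  have := twelve_mul_delta2_add_three v
  show T (j + 1 + 1) / topWeight v = 2
  exact Nat.div_eq_of_lt_le (by omega) (by omega)

theorem div_pow_eq_delta2_div_pow {j : ℕ} (h0 : leadDigit v T j = 0)
    (h1 : leadDigit v T (j + 1) = 1) : T j / 3 ^ (2 * v) = delta2 v / 3 ^ (2 * v) := by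
  have htop : T j / 3 ^ (2 * v + 2) = 0 := h0
  have hdigit1 := h.leadDigit_add (k := 1) (by omega) j
  have hdigit2 := h.leadDigit_add (k := 2) (by omega) j
  rw [h1, show 2 * v + 2 - 1 = 2 * v + 1 by omega] at hdigit1
  rw [h.leadDigit_add_two h0 h1, show 2 * v + 2 - 2 = 2 * v by omega] at hdigit2
  have e1 := div_pow_eq_mul_div_pow_succ_add_mod 3 (T j) (2 * v)
  have e2 := div_pow_eq_mul_div_pow_succ_add_mod 3 (T j) (2 * v + 1)
  rw [show 2 * v + 1 + 1 = 2 * v + 2 by omega] at e2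
  rw [delta2_div_pow_two_mul_self]
  omega

theorem leadDigit_ne_one_of_div_pow_eq {j c i : ℕ}
    (hpre : T j / 3 ^ (2 * c) = delta2 v / 3 ^ (2 * c)) (hi : j + 2 ≤ i)
    (hic : i + 2 * c ≤ j + 2 * v + 2) : leadDigit v T i ≠ 1 := by
  obtain ⟨k, rfl⟩ : ∃ k, i = j + k := ⟨i - j, by omega⟩
  rw [h.leadDigit_add (by omega), div_pow_eq_of_le (by omega) hpre]
  exact delta2_digit_ne_one (by omega)

/-- One more pair of letters `0 2` of `δ₂` is copied, unless the next `1` arrives first. -/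
theorem leadDigit_eq_one_or_div_pow_eq {j c e : ℕ} (hce : e + c + 1 = v)
    (hpre : T j / 3 ^ (2 * (c + 1)) = delta2 v / 3 ^ (2 * (c + 1))) :
    leadDigit v T (j + 3 + 2 * e) = 1 ∨ T j / 3 ^ (2 * c) = delta2 v / 3 ^ (2 * c) := by
  have hprev : leadDigit v T (j + 2 + 2 * e) = 2 := by
    rw [add_assoc j, h.leadDigit_add (by omega), show 2 * v + 2 - (2 + 2 * e) = 2 * (c + 1) by omega,
      hpre,
      delta2_digit_even (by omega)]
  have hx := h.leadDigit_add (k := 3 + 2 * e) (by omega) j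
  have hy := h.leadDigit_add (k := 4 + 2 * e) (by omega) j
  rw [← add_assoc, show 2 * v + 2 - (3 + 2 * e) = 2 * c + 1 by omega] at hx
  rw [← add_assoc, show 2 * v + 2 - (4 + 2 * e) = 2 * c by omega] at hy
  have hx2 : leadDigit v T (j + 3 + 2 * e) ≠ 2 := by
    simpa only [show j + 2 + 2 * e + 1 = j + 3 + 2 * e by omega] using h.leadDigit_succ_ne_two hprev
  have := h.leadDigit_lt_three (j + 3 + 2 * e)
  rcases (by omega : leadDigit v T (j + 3 + 2 * e) = 0 ∨ leadDigit v T (j + 3 + 2 * e) = 1)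
    with hx0 | hx1
  · right
    rw [mul_add, mul_one] at hpre
    have hpre' : T j / 3 ^ (2 * c + 1) = delta2 v / 3 ^ (2 * c + 1) :=
      div_pow_eq_of_div_pow_succ_eq hpre (by rw [← hx, hx0, delta2_digit_odd (by omega)])
    have hy0 : leadDigit v T (j + 4 + 2 * e) ≠ 0 := by
      simpa only [show j + 3 + 2 * e + 1 = j + 4 + 2 * e by omega] using h.leadDigit_succ_ne_zero hx0
    have := h.leadDigit_lt_three (j + 4 + 2 * e)
    have hD := delta2_digit_even (v := v) (c := c) (by omega)
    rcases (by omega : leadDigit v T (j + 4 + 2 * e) = 1 ∨ leadDigit v T (j + 4 + 2 * e) = 2)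
      with hy1 | hy2
    · have := lt_of_div_pow_succ_eq_of_digit_lt hpre' (by omega)
      have := h.delta2_le j
      omega
    · exact div_pow_eq_of_div_pow_succ_eq hpre' (by omega)
  · exact Or.inl hx1

theorem eq_delta2_or_exists_next_one {j : ℕ} (h0 : leadDigit v T j = 0)
    (h1 : leadDigit v T (j + 1) = 1) :
    T j = delta2 v ∨ ∃ e, IsRise v T (j + 2 + 2 * e) ∧
      ∀ i, j + 1 < i → i < j + 3 + 2 * e → leadDigit v T i ≠ 1 := by
  suffices ∀ c e, e + c = v → T j / 3 ^ (2 * c) = delta2 v / 3 ^ (2 * c) →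
      T j = delta2 v ∨ ∃ e, IsRise v T (j + 2 + 2 * e) ∧
        ∀ i, j + 1 < i → i < j + 3 + 2 * e → leadDigit v T i ≠ 1 from
    this v 0 (by omega) (h.div_pow_eq_delta2_div_pow h0 h1)
  intro c
  induction c with
  | zero => intro e _ hpre; simpa using Or.inl hpre
  | succ c ih =>
    intro e hce hpre
    rcases h.leadDigit_eq_one_or_div_pow_eq (by omega) hpre with hone | hpre'
    · refine Or.inr ⟨e, ⟨h.leadDigit_ne_one_of_div_pow_eq hpre (by omega) (by omega), ?_⟩,
        fun i hi hi' => h.leadDigit_ne_one_of_div_pow_eq hpre (by omega) (by omega)⟩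
      rwa [show j + 2 + 2 * e + 1 = j + 3 + 2 * e by omega]
    · exact ih (e + 1) (by omega) hpre'

theorem leadDigit_complement_eq_one_iff (j : ℕ) :
    leadDigit v (fun j => 3 * topWeight v - 1 - T j) j = 1 ↔ leadDigit v T j = 1 := by
  have := h.leadDigit_lt_three j
  rw [h.leadDigit_complement]
  omega

theorem exists_next_isRise
    (hne : ∀ i, T i ≠ delta2 v ∧ T i + delta2 v ≠ 3 * topWeight v - 1) {j : ℕ}
    (hj : IsRise v T j) :
    ∃ e, IsRise v T (j + 2 + 2 * e) ∧ ∀ i, j + 1 < i → i < j + 3 + 2 * e → leadDigit v T i ≠ 1 := by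
  obtain ⟨hj, hj1⟩ := hj
  have := h.leadDigit_lt_three j
  rcases (by omega : leadDigit v T j = 0 ∨ leadDigit v T j = 2) with h0 | h2
  · exact (h.eq_delta2_or_exists_next_one h0 hj1).resolve_left (hne j).1
  · have hc0 : leadDigit v (fun j => 3 * topWeight v - 1 - T j) j = 0 := by
      rw [h.leadDigit_complement, h2]
    have hc1 := (h.leadDigit_complement_eq_one_iff (j + 1)).mpr hj1
    have := h.add_delta2_le j
    have := (hne j).2
    simpa only [IsRise, ne_eq, h.leadDigit_complement_eq_one_iff] using
      (h.complement.eq_delta2_or_exists_next_one hc0 hc1).resolve_left (by omega)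

theorem even_of_isRise_of_isRise
    (hne : ∀ i, T i ≠ delta2 v ∧ T i + delta2 v ≠ 3 * topWeight v - 1) (k : ℕ) :
    ∀ j, IsRise v T j → IsRise v T (j + k) → Even k := by
  induction k using Nat.strong_induction_on with
  | _ k ih =>
    intro j hj hjk
    obtain ⟨e, he, hgap⟩ := h.exists_next_isRise hne hj
    obtain hlt | hge := lt_or_ge k (2 + 2 * e)
    · obtain rfl | hpos := Nat.eq_zero_or_pos k
      · exact ⟨0, rfl⟩
      · exact absurd hjk.2 (hgap _ (by omega) (by omega))
    · obtain ⟨r, hr⟩ := ih (k - (2 + 2 * e)) (by omega) _ he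
        (by rwa [show j + 2 + 2 * e + (k - (2 + 2 * e)) = j + k by omega])
      exact ⟨r + e + 1, by omega⟩

theorem two_mul_eq_of_forall_leadDigit_eq_one (hall : ∀ i, leadDigit v T i = 1) :
    2 * T 0 = 3 * topWeight v - 1 := by
  set X : ℕ → ℤ := fun i => 2 * (T i : ℤ) - (3 * topWeight v - 1 : ℕ) with hX
  have hstep : ∀ i, X (i + 1) = 3 * X i := fun i => by
    have hs := h.succ_eq i
    have hd := Nat.div_add_mod (T i) (topWeight v)
    have hi : T i / topWeight v = 1 := hall i
    rw [hi] at hs hd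
    have := nine_le_topWeight v
    simp only [hX]
    omega
  have hpow : ∀ i, X i = 3 ^ i * X 0 := fun i => by
    induction i with
    | zero => simp
    | succ i ih => rw [hstep, ih, pow_succ]; ring
  have hper : X (2 * v + 3) = X 0 := by simp only [hX, h.periodic.eq]
  have h3 : (1 : ℤ) < 3 ^ (2 * v + 3) := one_lt_pow₀ (by norm_num) (by omega)
  have hX0 : X 0 = 0 := by
    rw [hpow] at hper
    have : ((3 : ℤ) ^ (2 * v + 3) - 1) * X 0 = 0 := by linarith
    exact (mul_eq_zero.mp this).resolve_left (by linarith)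
  simp only [hX] at hX0
  omega

theorem exists_leadDigit_eq_one : ∃ i, leadDigit v T i = 1 := by
  by_contra! hno
  have hflip : ∀ i, leadDigit v T (i + 1) = 2 - leadDigit v T i := fun i => by
    have := h.leadDigit_lt_three i
    have := h.leadDigit_lt_three (i + 1)
    have := hno i
    have := hno (i + 1)
    rcases (by omega : leadDigit v T i = 0 ∨ leadDigit v T i = 2) with h0 | h2
    · have := h.leadDigit_succ_ne_zero h0; omega
    · have := h.leadDigit_succ_ne_two h2; omega
  have heven : ∀ t, leadDigit v T (2 * t) = leadDigit v T 0 := fun t => by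
    induction t with
    | zero => rfl
    | succ t ih =>
      have := h.leadDigit_lt_three 0
      rw [show 2 * (t + 1) = 2 * t + 1 + 1 by ring, hflip, hflip, ih]
      omega
  have hper := h.leadDigit_periodic.eq
  rw [show 2 * v + 3 = 2 * (v + 1) + 1 by ring, hflip, heven] at hper
  have := h.leadDigit_lt_three 0
  have := hno 0
  omega

theorem exists_eq_delta2_or_two_mul_eq :
    (∃ i, T i = delta2 v ∨ T i + delta2 v = 3 * topWeight v - 1) ∨
      2 * T 0 = 3 * topWeight v - 1 := by
  by_cases hall : ∀ i, leadDigit v T i = 1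
  · exact Or.inr (h.two_mul_eq_of_forall_leadDigit_eq_one hall)
  refine Or.inl (by_contra fun hne => ?_)
  push Not at hall hne
  obtain ⟨i₀, hi₀⟩ := hall
  obtain ⟨i₁, hi₁⟩ := h.exists_leadDigit_eq_one
  obtain ⟨j, hj⟩ := exists_not_and_succ (P := fun i => leadDigit v T i = 1)
    (a := i₀) (b := i₁ + (i₀ + 1) * (2 * v + 3)) (by nlinarith) hi₀
    (by simpa using (h.leadDigit_periodic.nat_mul (i₀ + 1) i₁).trans hi₁)
  have hjm : IsRise v T (j + (2 * v + 3)) := by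
    simpa only [IsRise, add_right_comm j, h.leadDigit_periodic _] using hj
  obtain ⟨r, hr⟩ := h.even_of_isRise_of_isRise hne _ j hj hjm
  omega

end BoundedOrbit

theorem boundedOrbit_of_delta2_le_absCosetLeader {v s : ℕ}
    (hle : delta2 v ≤ absCosetLeader (3 * topWeight v - 1) s) :
    BoundedOrbit v (fun j => s * 3 ^ j % (3 * topWeight v - 1)) := by
  set n := 3 * topWeight v - 1 with hn
  have hW := nine_le_topWeight v
  have hlt : ∀ j, s * 3 ^ j % n < n := fun j => Nat.mod_lt _ (by omega)
  have hbound : ∀ j, delta2 v ≤ min (s * 3 ^ j % n) (n - s * 3 ^ j % n) := fun j =>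
    hle.trans (Nat.sInf_le ⟨_, ⟨j, rfl⟩, rfl⟩)
  refine ⟨fun j => ?_, fun j => ?_, fun j => ?_, fun j => ?_⟩
  · calc s * 3 ^ (j + 1) % n = 3 * (s * 3 ^ j % n) % n := by
          rw [mul_comm 3, Nat.mod_mul_mod, pow_succ, mul_assoc]
      _ = _ := three_mul_mod_three_mul_sub_one (hlt j)
  · have hmod : 3 ^ (2 * v + 3) ≡ 1 [MOD n] := by
      rw [hn, three_mul_topWeight]; exact three_pow_modEq_one _
    have := hmod.mul_left (s * 3 ^ j)
    rw [mul_one] at this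
    rw [pow_add, ← mul_assoc]
    exact this
  · exact (hbound j).trans (min_le_left _ _)
  · have := (hbound j).trans (min_le_right _ _)
    have := hlt j
    omega

theorem absCosetLeader_lt_delta2 {v s : ℕ} (hs : s < 3 ^ (2 * v + 3) - 1)
    (h1 : cyclotomicCoset (3 ^ (2 * v + 3) - 1) s ≠
      cyclotomicCoset (3 ^ (2 * v + 3) - 1) ((3 ^ (2 * v + 3) - 1) / 2))
    (h2 : cyclotomicCoset (3 ^ (2 * v + 3) - 1) s ≠
      cyclotomicCoset (3 ^ (2 * v + 3) - 1) (delta2 v))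
    (h3 : cyclotomicCoset (3 ^ (2 * v + 3) - 1) s ≠
      cyclotomicCoset (3 ^ (2 * v + 3) - 1) (3 ^ (2 * v + 3) - 1 - delta2 v)) :
    absCosetLeader (3 ^ (2 * v + 3) - 1) s < delta2 v := by
  have hcoset {k : ℕ} (hk : k ∈ cyclotomicCoset (3 ^ (2 * v + 3) - 1) s) :
      cyclotomicCoset (3 ^ (2 * v + 3) - 1) s = cyclotomicCoset (3 ^ (2 * v + 3) - 1) k :=
    (cyclotomicCoset_eq_of_mem (by omega) (three_pow_modEq_one _) hk).symm
  rw [← three_mul_topWeight] at *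
  by_contra! hle
  rcases (boundedOrbit_of_delta2_le_absCosetLeader hle).exists_eq_delta2_or_two_mul_eq
    with ⟨i, hi | hi⟩ | hhalf
  · exact h2 (hcoset ⟨i, hi.symm⟩)
  · exact h3 (hcoset ⟨i, by omega⟩)
  · rw [pow_zero, mul_one, Nat.mod_eq_of_lt hs] at hhalf
    exact h1 (by rw [show s = (3 * topWeight v - 1) / 2 by omega])

theorem stmt5 (m : ℕ) (hm : 3 ≤ m) (hodd : Odd m) (s : ℕ) (hs : s < 3 ^ m - 1)
    (h1 : cyclotomicCoset (3 ^ m - 1) s ≠ cyclotomicCoset (3 ^ m - 1) ((3 ^ m - 1) / 2))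
    (h2 : cyclotomicCoset (3 ^ m - 1) s ≠
      cyclotomicCoset (3 ^ m - 1) ((3 ^ (m - 1) - 1) / 4 + 3 ^ (m - 2)))
    (h3 : cyclotomicCoset (3 ^ m - 1) s ≠
      cyclotomicCoset (3 ^ m - 1) ((3 ^ m - 1) - ((3 ^ (m - 1) - 1) / 4 + 3 ^ (m - 2)))) :
    absCosetLeader (3 ^ m - 1) s < (3 ^ (m - 1) - 1) / 4 + 3 ^ (m - 2) := by
  obtain ⟨v, rfl⟩ : ∃ v, m = 2 * v + 3 := by
    obtain ⟨t, rfl⟩ := hodd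
    exact ⟨t - 1, by omega⟩
  rw [show 2 * v + 3 - 1 = 2 * v + 2 by omega, show 2 * v + 3 - 2 = 2 * v + 1 by omega,
    delta2_eq] at *
  exact absCosetLeader_lt_delta2 hs h1 h2 h3
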